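/- arXiv:2504.21429 — 6 statements merged into one kernel-verified Lean document; each statement's English description precedes it below -/
import Mathlib

section
/- The language recognized by a quasi-ordered automaton over a finite preordered alphabet Σ is upwards-closed in the subword ordering on Σ*. -/
/-!
Reading a letter never lowers the state, and reading a larger letter from a larger state leads
to a larger state. Hence inserting letters into a word and enlarging its letters can only raise
the state reached, and `F` is an upper set.
-/

/-- Extension of a transition function `δ : Σ × Q → Q` to words:
`δ*(ε,q) = q` and `δ*(wσ,q) = δ(σ, δ*(w,q))`. -/
def deltaStar {σ Q : Type*} (δ : σ → Q → Q) (w : List σ) (q : Q) : Q :=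
  w.foldl (fun p a => δ a p) q

section

variable {σ Q : Type*} [Preorder Q] {δ : σ → Q → Q}

theorem le_deltaStar (hincr : ∀ (a : σ) (q : Q), q ≤ δ a q) (w : List σ) (q : Q) :
    q ≤ deltaStar δ w q := by
  induction w generalizing q with
  | nil => exact le_rfl
  | cons a w ih => exact (hincr a q).trans (ih (δ a q))

theorem deltaStar_le_deltaStar [Preorder σ]
    (hmono : ∀ (a a' : σ) (q q' : Q), a ≤ a' → q ≤ q' → δ a q ≤ δ a' q')
    (hincr : ∀ (a : σ) (q : Q), q ≤ δ a q)
    {w w' : List σ} (hww' : List.SublistForall₂ (· ≤ ·) w w') {q q' : Q} (hq : q ≤ q') :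
    deltaStar δ w q ≤ deltaStar δ w' q' := by
  induction hww' generalizing q q' with
  | nil => exact hq.trans (le_deltaStar hincr _ q')
  | cons ha _ ih => exact ih (hmono _ _ _ _ ha hq)
  | cons_right _ ih => exact ih (hq.trans (hincr _ q'))

end

theorem qo_automaton_language_upwardClosed_general {σ Q : Type*}
    [Preorder σ] [Preorder Q]
    (q0 : Q) (δ : σ → Q → Q) (F : Set Q)
    (hmono : ∀ (a a' : σ) (q q' : Q), a ≤ a' → q ≤ q' → δ a q ≤ δ a' q')
    (hincr : ∀ (a : σ) (q : Q), q ≤ δ a q)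
    (hF : IsUpperSet F)
    (w w' : List σ)
    (hw : deltaStar δ w q0 ∈ F)
    (hww' : List.SublistForall₂ (· ≤ ·) w w') :
    deltaStar δ w' q0 ∈ F :=
  hF (deltaStar_le_deltaStar hmono hincr hww' le_rfl) hw

/-- The language recognized by a quasi-ordered automaton over a finite
preordered alphabet is upwards-closed in the subword ordering. -/
theorem qo_automaton_language_upwardClosed {σ Q : Type*}
    [Preorder σ] [Fintype σ] [Preorder Q]
    (q0 : Q) (δ : σ → Q → Q) (F : Set Q)
    (hmono : ∀ (a a' : σ) (q q' : Q), a ≤ a' → q ≤ q' → δ a q ≤ δ a' q')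
    (hincr : ∀ (a : σ) (q : Q), q ≤ δ a q)
    (hF : IsUpperSet F)
    (w w' : List σ)
    (hw : deltaStar δ w q0 ∈ F)
    (hww' : List.SublistForall₂ (· ≤ ·) w w') :
    deltaStar δ w' q0 ∈ F :=
  qo_automaton_language_upwardClosed_general q0 δ F hmono hincr hF w w' hw hww'
end

section
/- Let A = (Q,q0,δ,F) be a reachable DFA over a preordered alphabet Σ, and let ⊑ be its canonical quasi-order on states. Then the language recognized by A is upwards-closed for the subword ordering if and only if both: (i) for all q ∈ Q and all letters σ ≼ σ', δ(σ,q) ⊑ δ(σ',q); and (ii) for all q ∈ Q and all σ ∈ Σ, q ⊑ δ(σ,q). Moreover, when these conditions hold, A equipped with ⊑ is a quasi-ordered automaton, i.e. δ is monotone in both arguments and F is upwards-closed for ⊑. -/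
/-- The canonical quasi-order on the states of a DFA:
`q ⊑ q'` iff for every word `w`, `δ*(w,q) ∈ F` implies `δ*(w,q') ∈ F`. -/
def canQO {σ Q : Type*} (δ : σ → Q → Q) (F : Set Q) (q q' : Q) : Prop :=
  ∀ w : List σ, deltaStar δ w q ∈ F → deltaStar δ w q' ∈ F

/-!
The canonical quasi-order is a right congruence: `q ⊑ q'` implies `δ*(w,q) ⊑ δ*(w,q')`.
Hence conditions (i) and (ii) propagate along the inductive definition of the subword
ordering to `δ*(w,q) ⊑ δ*(w',q)` for all `w ≼* w'` and all states `q`; at `q = q0` and the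
empty suffix this is upward closure of the language. Conversely, if `q = δ*(u,q0)` then
`δ*(w,q) ⊑ δ*(w',q)` says that `uwv ∈ L` implies `uw'v ∈ L`, which upward closure gives
since `uwv ≼* uw'v`; the one-letter cases `a ≼* a'` and `ε ≼* a` are (i) and (ii).
-/

theorem List.SublistForall₂.append {α β : Type*} {R : α → β → Prop}
    {l₁ m₁ : List α} {l₂ m₂ : List β}
    (hl : SublistForall₂ R l₁ l₂) (hm : SublistForall₂ R m₁ m₂) :
    SublistForall₂ R (l₁ ++ m₁) (l₂ ++ m₂) := by
  rw [sublistForall₂_iff] at hl hm ⊢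
  obtain ⟨l, hl, hll₂⟩ := hl
  obtain ⟨m, hm, hmm₂⟩ := hm
  exact ⟨l ++ m, rel_append hl hm, hll₂.append hmm₂⟩

section

variable {σ Q : Type*} {δ : σ → Q → Q} {F : Set Q}

theorem deltaStar_append (u v : List σ) (q : Q) :
    deltaStar δ (u ++ v) q = deltaStar δ v (deltaStar δ u q) :=
  List.foldl_append

theorem canQO.refl (q : Q) : canQO δ F q q := fun _ hw => hw

theorem canQO.trans {q q' q'' : Q} (h : canQO δ F q q') (h' : canQO δ F q' q'') :
    canQO δ F q q'' := fun w hw => h' w (h w hw)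

theorem canQO.deltaStar {q q' : Q} (h : canQO δ F q q') (w : List σ) :
    canQO δ F (deltaStar δ w q) (deltaStar δ w q') := by
  intro v hv
  rw [← deltaStar_append] at hv ⊢
  exact h (w ++ v) hv

theorem canQO.delta {q q' : Q} (h : canQO δ F q q') (a : σ) :
    canQO δ F (δ a q) (δ a q') :=
  h.deltaStar [a]

theorem canQO_deltaStar_self (h2 : ∀ (q : Q) (a : σ), canQO δ F q (δ a q))
    (w : List σ) (q : Q) : canQO δ F q (deltaStar δ w q) := by
  induction w generalizing q with
  | nil => exact canQO.refl q
  | cons a w ih => exact (h2 q a).trans (ih (δ a q))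

variable [Preorder σ]

theorem canQO_deltaStar_of_sublistForall₂
    (h1 : ∀ (q : Q) (a a' : σ), a ≤ a' → canQO δ F (δ a q) (δ a' q))
    (h2 : ∀ (q : Q) (a : σ), canQO δ F q (δ a q))
    {w w' : List σ} (h : List.SublistForall₂ (· ≤ ·) w w') (q : Q) :
    canQO δ F (deltaStar δ w q) (deltaStar δ w' q) := by
  induction h generalizing q with
  | nil => exact canQO_deltaStar_self h2 _ q
  | @cons a a' l l' haa' _ ih => exact ((h1 q a a' haa').deltaStar l).trans (ih (δ a' q))
  | @cons_right a l l' _ ih => exact (ih q).trans ((h2 q a).deltaStar l')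

theorem canQO_deltaStar_of_upwardClosed {q0 : Q}
    (hup : ∀ w w' : List σ, deltaStar δ w q0 ∈ F →
      List.SublistForall₂ (· ≤ ·) w w' → deltaStar δ w' q0 ∈ F)
    {w w' : List σ} (h : List.SublistForall₂ (· ≤ ·) w w') (u : List σ) :
    canQO δ F (deltaStar δ w (deltaStar δ u q0)) (deltaStar δ w' (deltaStar δ u q0)) := by
  intro v hv
  rw [← deltaStar_append, ← deltaStar_append] at hv ⊢
  have hu : List.SublistForall₂ (· ≤ ·) u u := refl u
  exact hup _ _ hv (hu.append (h.append (refl v)))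

end

/-- For a reachable DFA, the recognized language is upwards-closed for the
subword ordering iff (i) `δ(σ,q) ⊑ δ(σ',q)` whenever `σ ≼ σ'` and (ii)
`q ⊑ δ(σ,q)` always; moreover, in that case the DFA equipped with the canonical
quasi-order is a quasi-ordered automaton. -/
theorem upwardClosed_iff_qo_automaton {σ Q : Type*} [Preorder σ]
    (q0 : Q) (δ : σ → Q → Q) (F : Set Q)
    (hreach : ∀ q : Q, ∃ u : List σ, deltaStar δ u q0 = q) :
    ((∀ w w' : List σ, deltaStar δ w q0 ∈ F →
        List.SublistForall₂ (· ≤ ·) w w' → deltaStar δ w' q0 ∈ F)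
      ↔ ((∀ (q : Q) (a a' : σ), a ≤ a' → canQO δ F (δ a q) (δ a' q)) ∧
         (∀ (q : Q) (a : σ), canQO δ F q (δ a q)))) ∧
    (((∀ (q : Q) (a a' : σ), a ≤ a' → canQO δ F (δ a q) (δ a' q)) ∧
      (∀ (q : Q) (a : σ), canQO δ F q (δ a q))) →
      ((∀ (a a' : σ) (q q' : Q), a ≤ a' → canQO δ F q q' →
          canQO δ F (δ a q) (δ a' q')) ∧
       (∀ q q' : Q, q ∈ F → canQO δ F q q' → q' ∈ F))) := by
  refine ⟨⟨fun hup => ⟨?_, ?_⟩, fun ⟨h1, h2⟩ w w' hw h => ?_⟩, fun ⟨h1, _⟩ => ⟨?_, ?_⟩⟩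
  · intro q a a' haa'
    obtain ⟨u, rfl⟩ := hreach q
    exact canQO_deltaStar_of_upwardClosed hup (w := [a]) (w' := [a']) (.cons haa' .nil) u
  · intro q a
    obtain ⟨u, rfl⟩ := hreach q
    exact canQO_deltaStar_of_upwardClosed hup (.nil (l := [a])) u
  · exact canQO_deltaStar_of_sublistForall₂ h1 h2 h q0 [] hw
  · exact fun a a' q q' haa' hqq' => (h1 q a a' haa').trans (hqq'.delta a')
  · exact fun q q' hq hqq' => hqq' [] hq
end

section
/- Let A = (Q,q0,δ,F) be a quasi-ordered automaton over a preordered alphabet Σ whose order ⊑ on states is a partial order. If A accepts a word w, then there exists a sublist u of w such that A accepts u and the run of u from q0 is strictly increasing: for every i < |u|, δ*(u₁⋯uᵢ, q0) ⊏ δ*(u₁⋯uᵢ₊₁, q0), where ⊏ denotes the strict order associated to ⊑. -/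
section DropIdle

variable {σ Q : Type*} (δ : σ → Q → Q)

@[simp]
lemma deltaStar_nil (q : Q) : deltaStar δ [] q = q := rfl

@[simp]
lemma deltaStar_cons (a : σ) (w : List σ) (q : Q) :
    deltaStar δ (a :: w) q = deltaStar δ w (δ a q) := rfl

variable [DecidableEq Q]

def dropIdle : List σ → Q → List σ
  | [], _ => []
  | a :: w, q => if δ a q = q then dropIdle w q else a :: dropIdle w (δ a q)

lemma deltaStar_dropIdle (w : List σ) (q : Q) :
    deltaStar δ (dropIdle δ w q) q = deltaStar δ w q := by
  induction w generalizing q with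
  | nil => rfl
  | cons a w ih =>
    by_cases h : δ a q = q <;> simp [dropIdle, h, ih]

lemma dropIdle_sublist (w : List σ) (q : Q) : (dropIdle δ w q).Sublist w := by
  induction w generalizing q with
  | nil => exact .slnil
  | cons a w ih =>
    by_cases h : δ a q = q
    · simpa [dropIdle, h] using (ih q).cons a
    · simpa [dropIdle, h] using (ih (δ a q)).cons_cons a

lemma deltaStar_take_dropIdle_lt [PartialOrder Q] (hincr : ∀ a q, q ≤ δ a q)
    (w : List σ) (q : Q) :
    ∀ i < (dropIdle δ w q).length,
      deltaStar δ ((dropIdle δ w q).take i) q < deltaStar δ ((dropIdle δ w q).take (i + 1)) q := by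
  induction w generalizing q with
  | nil => simp [dropIdle]
  | cons a w ih =>
    by_cases h : δ a q = q
    · simpa [dropIdle, h] using ih q
    · intro i hi
      cases i with
      | zero => simpa [dropIdle, h] using lt_of_le_of_ne (hincr a q) (Ne.symm h)
      | succ i => simpa [dropIdle, h] using ih (δ a q) i (by simpa [dropIdle, h] using hi)

end DropIdle

theorem accepted_sublist_strictly_increasing_run_general {σ Q : Type*}
    [PartialOrder Q]
    (q0 : Q) (δ : σ → Q → Q) (F : Set Q)
    (hincr : ∀ (a : σ) (q : Q), q ≤ δ a q)
    (w : List σ) (hw : deltaStar δ w q0 ∈ F) :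
    ∃ u : List σ, u.Sublist w ∧ deltaStar δ u q0 ∈ F ∧
      ∀ i < u.length,
        deltaStar δ (u.take i) q0 < deltaStar δ (u.take (i + 1)) q0 := by
  classical
  exact ⟨dropIdle δ w q0, dropIdle_sublist δ w q0, (deltaStar_dropIdle δ w q0).symm ▸ hw,
    deltaStar_take_dropIdle_lt δ hincr w q0⟩

/-- In a quasi-ordered automaton whose state order is a partial order, any
accepted word has an accepted sublist whose run from `q0` is strictly
increasing. -/
theorem accepted_sublist_strictly_increasing_run {σ Q : Type*}
    [Preorder σ] [PartialOrder Q]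
    (q0 : Q) (δ : σ → Q → Q) (F : Set Q)
    (hmono : ∀ (a a' : σ) (q q' : Q), a ≤ a' → q ≤ q' → δ a q ≤ δ a' q')
    (hincr : ∀ (a : σ) (q : Q), q ≤ δ a q)
    (hF : IsUpperSet F)
    (w : List σ) (hw : deltaStar δ w q0 ∈ F) :
    ∃ u : List σ, u.Sublist w ∧ deltaStar δ u q0 ∈ F ∧
      ∀ i < u.length,
        deltaStar δ (u.take i) q0 < deltaStar δ (u.take (i + 1)) q0 :=
  accepted_sublist_strictly_increasing_run_general q0 δ F hincr w hw
end

section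
/- Let X be a preordered set that is a well quasi-order, let Y be a preordered set, and let e : X → Y be a monotone surjection. Then every ideal J of Y is of the form J = ↓e[I] for some ideal I of X. -/
/-!
Pull `J` back to the lower set `e ⁻¹' J`; by surjectivity `J = e[e ⁻¹' J]`. In a WQO the lower
sets satisfy the descending chain condition, so there is a lower set `I` minimal among those
with `J ⊆ ↓e[I]`. Such an `I` is an ideal: if `a, b ∈ I` had no common upper bound in `I`, then
`I` would be the union of the smaller lower sets `I \ ↑a` and `I \ ↑b`, and the directed set `J`,
being covered by their two lower closures, would already lie in one of them. Finally
`↓e[I] ⊆ J` because `e[I] ⊆ J` and `J` is a lower set.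
-/

instance LowerSet.wellFoundedLT_of_wellQuasiOrderedLE {X : Type*} [Preorder X]
    [WellQuasiOrderedLE X] : WellFoundedLT (LowerSet X) := by
  refine ⟨wellFounded_iff_isEmpty_descending_chain.2 ⟨fun ⟨D, hD⟩ => ?_⟩⟩
  have hanti : Antitone D := antitone_nat_of_succ_le fun n => (hD n).le
  choose x hxD hxD' using fun n => Set.exists_of_ssubset (LowerSet.coe_ssubset_coe.2 (hD n))
  obtain ⟨i, j, hij, hle⟩ := wellQuasiOrdered_le x
  exact hxD' i ((D (i + 1)).lower hle (hanti hij (hxD j)))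

theorem DirectedOn.subset_or_subset_of_subset_union {Y : Type*} [Preorder Y] {J s t : Set Y}
    (hJ : DirectedOn (· ≤ ·) J) (hs : IsLowerSet s) (ht : IsLowerSet t) (h : J ⊆ s ∪ t) :
    J ⊆ s ∨ J ⊆ t := by
  by_contra! hst
  obtain ⟨⟨a, haJ, has⟩, ⟨b, hbJ, hbt⟩⟩ := And.imp Set.not_subset.1 Set.not_subset.1 hst
  obtain ⟨c, hcJ, hac, hbc⟩ := hJ a haJ b hbJ
  rcases h hcJ with hcs | hct
  exacts [has (hs hac hcs), hbt (ht hbc hct)]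

theorem Order.isIdeal_of_minimal_subset_lowerClosure_image {X Y : Type*} [Preorder X]
    [Preorder Y] {e : X → Y} {J : Set Y} (hne : J.Nonempty) (hdir : DirectedOn (· ≤ ·) J)
    {I : LowerSet X} (hI : Minimal (fun I : LowerSet X => J ⊆ lowerClosure (e '' I)) I) :
    Order.IsIdeal (I : Set X) := by
  refine ⟨I.lower, ?_, fun a ha b hb => ?_⟩
  · obtain ⟨y, hy⟩ := hne
    obtain ⟨_, ⟨x, hx, -⟩, -⟩ := hI.prop hy
    exact ⟨x, hx⟩
  · by_contra! hab
    have hcover : e '' I ⊆ e '' (I.erase a) ∪ e '' (I.erase b) := by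
      rw [← Set.image_union]
      refine Set.image_mono fun x hx => ?_
      by_cases hax : a ≤ x
      · exact Or.inr ⟨hx, fun hbx => hab x hx hax hbx⟩
      · exact Or.inl ⟨hx, hax⟩
    have hJ : J ⊆ lowerClosure (e '' I.erase a) ∪ lowerClosure (e '' I.erase b) := by
      rw [← LowerSet.coe_sup, ← lowerClosure_union]
      exact hI.prop.trans (lowerClosure_mono hcover)
    rcases hdir.subset_or_subset_of_subset_union (LowerSet.lower _) (LowerSet.lower _) hJ
      with h | h
    exacts [hI.not_prop_of_lt (LowerSet.erase_lt.2 ha) h,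
      hI.not_prop_of_lt (LowerSet.erase_lt.2 hb) h]

/-- If `X` is a WQO and `e : X → Y` is a monotone surjection, every ideal of
`Y` is the downward closure of the image of an ideal of `X`. -/
theorem ideal_eq_lowerClosure_image {X Y : Type*} [Preorder X] [Preorder Y]
    (hwqo : ∀ f : ℕ → X, ∃ i j : ℕ, i < j ∧ f i ≤ f j)
    (e : X → Y) (hmono : Monotone e) (hsurj : Function.Surjective e)
    (J : Set Y) (hJ : Order.IsIdeal J) :
    ∃ I : Set X, Order.IsIdeal I ∧ J = ↑(lowerClosure (e '' I)) := by
  have : WellQuasiOrderedLE X := ⟨hwqo⟩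
  let D : LowerSet X := ⟨e ⁻¹' J, hJ.IsLowerSet.preimage hmono⟩
  have hJD : J ⊆ lowerClosure (e '' D) := by
    change J ⊆ lowerClosure (e '' (e ⁻¹' J))
    rw [Set.image_preimage_eq J hsurj]
    exact subset_lowerClosure
  obtain ⟨I, hID, hI⟩ :=
    exists_minimal_le_of_wellFoundedLT (fun I : LowerSet X => J ⊆ lowerClosure (e '' I)) D hJD
  have hIJ : ↑(lowerClosure (e '' I)) ⊆ J :=
    lowerClosure_min (Set.image_subset_iff.2 hID) hJ.IsLowerSet
  exact ⟨I, Order.isIdeal_of_minimal_subset_lowerClosure_image hJ.Nonempty hJ.Directed hI,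
    hI.prop.antisymm hIJ⟩
end

section
/- Let k ≥ 1, let the alphabet be Fin k with the equality order, and let |·| : (Fin k)* → ℕ^k be the Parikh map counting occurrences of each letter. Let P ⊆ (Fin k)* be the *-product language P = (Σ'₀)* σ₁? (Σ'₁)* σ₂? ⋯ σₙ? (Σ'ₙ)*, where each Σ'ⱼ ⊆ Fin k is nonempty, (Σ')* denotes the set of words all of whose letters lie in Σ', and σ? = {ε, σ}; concretely P is the set of all concatenations u₀v₁u₁⋯vₙuₙ with each uⱼ ∈ (Σ'ⱼ)* and each vⱼ ∈ {ε, σⱼ}. Then the downward closure of the image |P| in ℕ^k (for the componentwise order) equals the set of x ∈ ℕ^k such that for every letter i ∈ Fin k, either i belongs to some Σ'ⱼ, or xᵢ is at most the number of occurrences of i in the word σ₁⋯σₙ. -/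
/-- The Parikh map: a word over `Fin k` is sent to the tuple counting the
occurrences of each letter. -/
def parikh {k : ℕ} (w : List (Fin k)) : Fin k → ℕ := fun i => w.count i

/-- The `*`-product language `(Σ'₀)* σ₁? (Σ'₁)* σ₂? ⋯ σₙ? (Σ'ₙ)*`:
all concatenations `u₀v₁u₁⋯vₙuₙ` with `uⱼ ∈ (Σ'ⱼ)*` and `vⱼ ∈ {ε, σⱼ}`. -/
def starProduct {k n : ℕ} (S : Fin (n + 1) → Set (Fin k)) (s : Fin n → Fin k) :
    Set (List (Fin k)) :=
  {w | ∃ (u : Fin (n + 1) → List (Fin k)) (v : Fin n → List (Fin k)),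
    (∀ j, ∀ a ∈ u j, a ∈ S j) ∧
    (∀ i, v i = [] ∨ v i = [s i]) ∧
    w = u 0 ++ (List.ofFn fun i : Fin n => v i ++ u i.succ).flatten}

/-! A letter lying in no `Σ'ⱼ` can only be produced by the optional letters `σⱼ`, which bounds
its count by its count in `σ₁⋯σₙ`. Conversely, an admissible `x` is dominated by the Parikh
image of the word that takes every `σⱼ` and fills the `j`-th starred factor with `x a` copies of
each letter `a ∈ Σ'ⱼ`. -/

theorem List.count_ofFn {α : Type*} [DecidableEq α] {n : ℕ} (f : Fin n → α) (a : α) :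
    (List.ofFn f).count a = ∑ i, [f i].count a := by
  induction n with
  | zero => simp
  | succ n ih =>
    simp only [List.ofFn_succ, List.count_cons, Fin.sum_univ_succ, ih, List.count_nil]
    ring

theorem parikh_surjective (k : ℕ) : Function.Surjective (parikh : List (Fin k) → Fin k → ℕ) :=
  fun x => ⟨(List.finRange k).flatMap fun b => List.replicate (x b) b, funext fun a => by
    simp [parikh, List.count_flatMap, ← Fin.sum_univ_def, List.count_replicate]⟩

theorem count_starProduct_word {k n : ℕ} (u : Fin (n + 1) → List (Fin k))
    (v : Fin n → List (Fin k)) (a : Fin k) :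
    (u 0 ++ (List.ofFn fun i : Fin n => v i ++ u i.succ).flatten).count a
      = ∑ j, (u j).count a + ∑ i, (v i).count a := by
  simp only [List.count_append, List.count_flatten, List.map_ofFn, List.sum_ofFn,
    Function.comp_apply, Finset.sum_add_distrib, Fin.sum_univ_succ]
  ring

theorem count_le_of_mem_starProduct {k n : ℕ} {S : Fin (n + 1) → Set (Fin k)} {s : Fin n → Fin k}
    {w : List (Fin k)} (hw : w ∈ starProduct S s) {a : Fin k} (ha : ∀ j, a ∉ S j) :
    w.count a ≤ (List.ofFn s).count a := by
  obtain ⟨u, v, hu, hv, rfl⟩ := hw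
  have hu0 : ∀ j, (u j).count a = 0 := fun j =>
    List.count_eq_zero.mpr fun h => ha j (hu j a h)
  have hv_le : ∀ i, (v i).count a ≤ [s i].count a := fun i => by
    rcases hv i with h | h <;> simp [h]
  rw [count_starProduct_word, List.count_ofFn]
  simpa [hu0] using Finset.sum_le_sum fun i _ => hv_le i

theorem exists_mem_starProduct_le_parikh {k n : ℕ} (S : Fin (n + 1) → Set (Fin k))
    (s : Fin n → Fin k) {x : Fin k → ℕ}
    (hx : ∀ a, (∃ j, a ∈ S j) ∨ x a ≤ (List.ofFn s).count a) :
    ∃ w ∈ starProduct S s, x ≤ parikh w := by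
  classical
  obtain ⟨w, hw⟩ := parikh_surjective k x
  let u : Fin (n + 1) → List (Fin k) := fun j => w.filter (· ∈ S j)
  refine ⟨_, ⟨u, fun i => [s i], fun j a ha => by simpa using (List.mem_filter.mp ha).2,
    fun i => Or.inr rfl, rfl⟩, fun a => ?_⟩
  rw [parikh, count_starProduct_word, ← List.count_ofFn]
  rcases hx a with ⟨j, haj⟩ | hle
  · calc x a = (u j).count a := by rw [List.count_filter (by simpa using haj), ← hw, parikh]
      _ ≤ ∑ j, (u j).count a :=
        Finset.single_le_sum (f := fun j => (u j).count a) (fun _ _ => Nat.zero_le _)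
          (Finset.mem_univ j)
      _ ≤ _ := Nat.le_add_right _ _
  · exact hle.trans (Nat.le_add_left _ _)

theorem lowerClosure_parikh_starProduct_general (k : ℕ) (n : ℕ)
    (S : Fin (n + 1) → Set (Fin k))
    (s : Fin n → Fin k) :
    (↑(lowerClosure (parikh '' starProduct S s)) : Set (Fin k → ℕ)) =
      {x : Fin k → ℕ | ∀ i : Fin k,
        (∃ j, i ∈ S j) ∨ x i ≤ (List.ofFn s).count i} := by
  ext x
  simp only [SetLike.mem_coe, mem_lowerClosure, Set.exists_mem_image, Set.mem_ofPred_eq]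
  constructor
  · rintro ⟨w, hw, hxw⟩ i
    refine or_iff_not_imp_left.mpr fun hi => (hxw i).trans ?_
    exact count_le_of_mem_starProduct hw (not_exists.mp hi)
  · exact exists_mem_starProduct_le_parikh S s

/-- The downward closure in `ℕ^k` of the Parikh image of a `*`-product
`(Σ'₀)* σ₁? ⋯ σₙ? (Σ'ₙ)*` (with each `Σ'ⱼ` nonempty) is the set of tuples `x`
such that for every letter `i`, either `i` appears in some `Σ'ⱼ` or `xᵢ` is at
most the number of occurrences of `i` in `σ₁⋯σₙ`. -/
theorem lowerClosure_parikh_starProduct (k : ℕ) (hk : 1 ≤ k) (n : ℕ)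
    (S : Fin (n + 1) → Set (Fin k)) (hS : ∀ j, (S j).Nonempty)
    (s : Fin n → Fin k) :
    (↑(lowerClosure (parikh '' starProduct S s)) : Set (Fin k → ℕ)) =
      {x : Fin k → ℕ | ∀ i : Fin k,
        (∃ j, i ∈ S j) ∨ x i ≤ (List.ofFn s).count i} :=
  lowerClosure_parikh_starProduct_general k n S s
end

section
/- Let Σ be a finite preordered alphabet and let U ⊆ Σ* be upwards-closed for the subword ordering. Then U is a regular language: there exists a DFA over Σ with a finite set of states whose recognized language is exactly U. -/
/-!
By Higman's lemma the subword ordering on words over a finite alphabet is a well-quasi-order.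
Below every word of `U` lies a word of `U` that is of minimal length among the words of `U`
below it; two such words are comparable only if they have the same length, so their lengths form
an antichain and are bounded. Hence `U` is the finite union of the upward closures of its words of
bounded length. The upward closure of a single word `m` is regular by Myhill–Nerode: reading a
letter either leaves it unchanged or replaces it by the upward closure of `m.tail`, so its left
quotients are the upward closures of the suffixes of `m`.
-/

open List Set

namespace List

variable {α β : Type*} {R : α → β → Prop}

theorem SublistForall₂.length_le {l₁ : List α} {l₂ : List β} (h : SublistForall₂ R l₁ l₂) :
    l₁.length ≤ l₂.length := by
  obtain ⟨l, hl, hsub⟩ := sublistForall₂_iff.1 h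
  exact hl.length_eq ▸ hsub.length_le

theorem SublistForall₂.of_cons {a : α} {l₁ : List α} {l₂ : List β}
    (h : SublistForall₂ R (a :: l₁) l₂) : SublistForall₂ R l₁ l₂ := by
  obtain ⟨_, _ | ⟨-, hl⟩, hsub⟩ := sublistForall₂_iff.1 h
  exact sublistForall₂_iff.2 ⟨_, hl, (sublist_cons_self _ _).trans hsub⟩

theorem sublistForall₂_cons_cons_iff {a : α} {b : β} {l₁ : List α} {l₂ : List β} :
    SublistForall₂ R (a :: l₁) (b :: l₂) ↔
      R a b ∧ SublistForall₂ R l₁ l₂ ∨ SublistForall₂ R (a :: l₁) l₂ := by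
  constructor
  · rintro (_ | ⟨hab, h⟩ | h)
    exacts [Or.inl ⟨hab, h⟩, Or.inr h]
  · rintro (⟨hab, h⟩ | h)
    exacts [.cons hab h, .cons_right h]

end List

namespace Set.PartiallyWellOrderedOn

variable {α : Type*} {r : α → α → Prop} {s : Set α}

theorem exists_bounded_basis [Std.Refl r] [IsTrans α r] (hs : s.PartiallyWellOrderedOn r)
    (f : α → ℕ) (hf : ∀ x y, r x y → f x ≤ f y) : ∃ N, ∀ x ∈ s, ∃ y ∈ s, f y ≤ N ∧ r y x := by
  set M := {y ∈ s | ∀ z ∈ s, r z y → f y ≤ f z}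
  have exists_minimal_below : ∀ x ∈ s, ∃ y ∈ M, r y x := by
    intro x hx
    obtain ⟨y, ⟨hys, hyx⟩, hmin⟩ :=
      (measure f).wf.has_min {y | y ∈ s ∧ r y x} ⟨x, hx, Std.Refl.refl x⟩
    exact ⟨y, ⟨hys, fun z hzs hzy => not_lt.1 (hmin z ⟨hzs, _root_.trans hzy hyx⟩)⟩, hyx⟩
  -- On `M`, `r` only relates elements with the same `f`-value, so `f '' M` is an antichain.
  have hfin : (f '' M).Finite := by
    refine IsAntichain.finite_of_partiallyWellOrderedOn (r := (· = ·)) (fun _ _ _ _ h => h) ?_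
    refine (hs.mono fun y hy => hy.1).image_of_monotone_on fun y₁ hy₁ y₂ hy₂ h => ?_
    exact le_antisymm (hf _ _ h) (hy₂.2 y₁ hy₁.1 h)
  obtain ⟨N, hN⟩ := hfin.bddAbove
  refine ⟨N, fun x hx => ?_⟩
  obtain ⟨y, hy, hyx⟩ := exists_minimal_below x hx
  exact ⟨y, hy.1, hN ⟨y, hy, rfl⟩, hyx⟩

end Set.PartiallyWellOrderedOn

namespace Language

variable {α β : Type*}

theorem isRegular_bot : (⊥ : Language α).IsRegular :=
  ⟨Unit, inferInstance, ⟨fun _ _ => (), (), ∅⟩, by ext; exact Iff.rfl⟩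

theorem isRegular_biSup {ι : Type*} {s : Set ι} (hs : s.Finite) {L : ι → Language α}
    (hL : ∀ i ∈ s, (L i).IsRegular) : (⨆ i ∈ s, L i).IsRegular := by
  induction s, hs using Set.Finite.induction_on with
  | empty => simpa using isRegular_bot
  | insert _ _ ih =>
    rw [iSup_insert]
    exact (hL _ (mem_insert _ _)).add (ih fun i hi => hL i (mem_insert_of_mem _ hi))

variable (R : α → β → Prop)

def superwords (m : List α) : Language β := {w | SublistForall₂ R m w}

variable {R}

theorem mem_superwords {m : List α} {w : List β} : w ∈ superwords R m ↔ SublistForall₂ R m w :=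
  Iff.rfl

variable (R)

theorem exists_suffix_leftQuotient_superwords (t : List α) (a : β) :
    ∃ t', t' <:+ t ∧ (superwords R t).leftQuotient [a] = superwords R t' := by
  rcases t with _ | ⟨b, t⟩
  · exact ⟨[], suffix_refl _, by ext; simp [mem_superwords, SublistForall₂.nil]⟩
  by_cases hba : R b a
  · refine ⟨t, suffix_cons _ _, ?_⟩
    ext v
    simp only [mem_leftQuotient, mem_superwords, singleton_append, sublistForall₂_cons_cons_iff,
      hba, true_and, or_iff_left_of_imp SublistForall₂.of_cons]
  · refine ⟨b :: t, suffix_refl _, ?_⟩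
    ext v
    simp only [mem_leftQuotient, mem_superwords, singleton_append, sublistForall₂_cons_cons_iff,
      hba, false_and, false_or]

theorem isRegular_superwords (m : List α) : (superwords R m).IsRegular := by
  refine IsRegular.of_finite_range_leftQuotient
    ((m.tails.finite_toSet.image (superwords R)).subset ?_)
  rintro _ ⟨w, rfl⟩
  induction w using List.reverseRecOn with
  | nil => exact ⟨m, by simp, rfl⟩
  | append_singleton w a ih =>
    obtain ⟨t, ht, hw⟩ := ih
    obtain ⟨t', ht', hq⟩ := exists_suffix_leftQuotient_superwords R t a
    refine ⟨t', (mem_tails _ _).2 (ht'.trans ((mem_tails _ _).1 ht)), ?_⟩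
    rw [leftQuotient_append, ← hw, hq]

theorem isRegular_of_sublistForall₂_closed [Preorder α] [Finite α] {L : Language α}
    (hL : ∀ w w', w ∈ L → SublistForall₂ (· ≤ ·) w w' → w' ∈ L) : L.IsRegular := by
  have hpwo : (L : Set (List α)).PartiallyWellOrderedOn (SublistForall₂ (· ≤ ·)) :=
    (finite_univ.partiallyWellOrderedOn.partiallyWellOrderedOn_sublistForall₂ _).mono
      fun _ _ _ _ => mem_univ _
  obtain ⟨N, hN⟩ := hpwo.exists_bounded_basis length fun _ _ h => h.length_le
  have hL_eq : L = ⨆ m ∈ {m ∈ L | m.length ≤ N}, superwords (· ≤ ·) m := by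
    ext w
    simp only [mem_iSup, mem_superwords, exists_prop, mem_ofPred_eq]
    constructor
    · intro hw
      obtain ⟨m, hm, hmN, hmw⟩ := hN w hw
      exact ⟨m, ⟨hm, hmN⟩, hmw⟩
    · rintro ⟨m, ⟨hm, -⟩, hmw⟩
      exact hL m w hm hmw
  rw [hL_eq]
  exact isRegular_biSup ((List.finite_length_le α N).subset fun _ h => h.2)
    fun m _ => isRegular_superwords _ m

end Language

/-- Over a finite preordered alphabet, every language upwards-closed for the
subword ordering is recognized by a DFA with finitely many states. -/
theorem upwardClosed_regular {σ : Type*} [Preorder σ] [Fintype σ]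
    (U : Set (List σ))
    (hU : ∀ w w' : List σ, w ∈ U → List.SublistForall₂ (· ≤ ·) w w' → w' ∈ U) :
    ∃ (Q : Type) (_ : Fintype Q) (q0 : Q) (δ : σ → Q → Q) (F : Set Q),
      ∀ w : List σ, w ∈ U ↔ deltaStar δ w q0 ∈ F := by
  obtain ⟨Q, _, M, hM⟩ := Language.isRegular_of_sublistForall₂_closed (L := U) hU
  exact ⟨Q, inferInstance, M.start, fun a q => M.step q a, M.accept, fun w => by rw [← hM]; rfl⟩
end
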